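/- arXiv:1808.10013 — 6 statements merged into one kernel-verified Lean document; each statement's English description precedes it below -/
import Mathlib

section
/- For p, q ∈ (0,1), the KL divergence between Bernoulli(p) and Bernoulli(q) satisfies KL(Bernoulli(p), Bernoulli(q)) ≤ (p - q)^2 / (2 · min{p(1-p), q(1-q)}). -/
/-!
Write `ℓ(x) = p log x + (1 - p) log (1 - x)`, so that the divergence is `ℓ(p) - ℓ(q)` and
`ℓ'(x) = (p - x) / (x (1 - x))`. Since `x (1 - x)` is concave, it is at least
`m = min (p (1 - p)) (q (1 - q))` between `p` and `q`, so `|ℓ'(x)| ≤ |p - x| / m` there and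
integrating gives `ℓ(p) - ℓ(q) ≤ (p - q)² / (2m)`. The substitution `(p, q) ↦ (1 - p, 1 - q)`
preserves both sides, so it suffices to treat `q ≤ p`.
-/

open Real Set

lemma min_mul_one_sub_le_of_mem_Icc {a b x : ℝ} (hx : x ∈ Icc a b) :
    min (a * (1 - a)) (b * (1 - b)) ≤ x * (1 - x) := by
  obtain ⟨hax, hxb⟩ := hx
  rcases le_total (x + a) 1 with h | h
  · exact (min_le_left _ _).trans
      (by nlinarith [mul_nonneg (sub_nonneg.2 hax) (by linarith : (0 : ℝ) ≤ 1 - a - x)])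
  · exact (min_le_right _ _).trans
      (by nlinarith [mul_nonneg (sub_nonneg.2 hxb) (by linarith : (0 : ℝ) ≤ x + b - 1)])

lemma sub_le_of_deriv_le_mul_sub {f f' : ℝ → ℝ} {a b c : ℝ} (hab : a ≤ b)
    (hf : ∀ x ∈ Icc a b, HasDerivAt f (f' x) x) (hf' : ∀ x ∈ Ioo a b, f' x ≤ c * (b - x)) :
    f b - f a ≤ c * (b - a) ^ 2 / 2 := by
  set g : ℝ → ℝ := fun x => f x + c * (b - x) ^ 2 / 2
  have hg : ∀ x ∈ Icc a b, HasDerivAt g (f' x - c * (b - x)) x := fun x hx => by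
    refine ((hf x hx).fun_add
      (((hasDerivAt_id' (x := x)).const_sub b).pow 2 |>.const_mul c |>.div_const 2)).congr_deriv ?_
    ring
  have hanti : AntitoneOn g (Icc a b) := by
    refine antitoneOn_of_deriv_nonpos (convex_Icc a b)
      (fun x hx => (hg x hx).continuousAt.continuousWithinAt) (fun x hx => ?_) (fun x hx => ?_)
    all_goals rw [interior_Icc] at hx
    · exact (hg x (Ioo_subset_Icc_self hx)).differentiableAt.differentiableWithinAt
    · rw [(hg x (Ioo_subset_Icc_self hx)).deriv]
      linarith [hf' x hx]
  have := hanti (left_mem_Icc.2 hab) (right_mem_Icc.2 hab) hab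
  simp only [g, sub_self] at this
  linarith

lemma hasDerivAt_bernoulli_logLikelihood {p x : ℝ} (hx : x ∈ Ioo (0 : ℝ) 1) :
    HasDerivAt (fun y => p * log y + (1 - p) * log (1 - y)) ((p - x) / (x * (1 - x))) x := by
  obtain ⟨hx0, hx1⟩ := hx
  have h1x : 1 - x ≠ 0 := by linarith
  refine (((hasDerivAt_log hx0.ne').const_mul p).fun_add
    (((hasDerivAt_id' (x := x)).const_sub 1).log h1x |>.const_mul (1 - p))).congr_deriv ?_
  field_simp
  ring

noncomputable def bernoulliKL (p q : ℝ) : ℝ :=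
  p * log (p / q) + (1 - p) * log ((1 - p) / (1 - q))

lemma bernoulliKL_one_sub (p q : ℝ) : bernoulliKL (1 - p) (1 - q) = bernoulliKL p q := by
  simp only [bernoulliKL, sub_sub_cancel]
  ring

lemma bernoulliKL_le_of_le {p q : ℝ} (hq : 0 < q) (hqp : q ≤ p) (hp : p < 1) :
    bernoulliKL p q ≤ (p - q) ^ 2 / (2 * min (p * (1 - p)) (q * (1 - q))) := by
  set m := min (p * (1 - p)) (q * (1 - q))
  have hm : 0 < m := lt_min (by nlinarith) (by nlinarith)
  have hIcc : Icc q p ⊆ Ioo 0 1 := Icc_subset_Ioo hq hp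
  have hderiv : ∀ x ∈ Ioo q p, (p - x) / (x * (1 - x)) ≤ m⁻¹ * (p - x) := fun x hx => by
    have hmx : m ≤ x * (1 - x) := by
      simpa only [m, min_comm] using min_mul_one_sub_le_of_mem_Icc (Ioo_subset_Icc_self hx)
    rw [inv_mul_eq_div]
    exact div_le_div_of_nonneg_left (by linarith [hx.2]) hm hmx
  have key := sub_le_of_deriv_le_mul_sub hqp
    (fun x hx => hasDerivAt_bernoulli_logLikelihood (hIcc hx)) hderiv
  have hKL : bernoulliKL p q =
      (p * log p + (1 - p) * log (1 - p)) - (p * log q + (1 - p) * log (1 - q)) := by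
    rw [bernoulliKL, log_div (by linarith) hq.ne', log_div (by linarith) (by linarith)]
    ring
  rw [hKL]
  calc _ ≤ m⁻¹ * (p - q) ^ 2 / 2 := key
    _ = _ := by field_simp

/-- For p, q ∈ (0,1), the KL divergence between Bernoulli(p) and Bernoulli(q)
satisfies KL(Bern(p), Bern(q)) ≤ (p - q)² / (2 min{p(1-p), q(1-q)}). -/
theorem bernoulli_kl_upper_bound (p q : ℝ)
    (hp : p ∈ Set.Ioo (0 : ℝ) 1) (hq : q ∈ Set.Ioo (0 : ℝ) 1) :
    p * Real.log (p / q) + (1 - p) * Real.log ((1 - p) / (1 - q)) ≤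
      (p - q) ^ 2 / (2 * min (p * (1 - p)) (q * (1 - q))) := by
  obtain ⟨hp0, hp1⟩ := hp
  obtain ⟨hq0, hq1⟩ := hq
  change bernoulliKL p q ≤ _
  rcases le_total q p with hqp | hpq
  · exact bernoulliKL_le_of_le hq0 hqp hp1
  · have h := bernoulliKL_le_of_le (sub_pos.2 hq1) (sub_le_sub_left hpq 1) (by linarith)
    rw [bernoulliKL_one_sub] at h
    convert h using 2 <;> ring_nf
end

section
/- Let Φ: 𝒳 → 𝒳' be any measurable map, and define f_Φ(X) := E[Y | Φ(X), A]. Then f_Φ is sufficient and calibrated: E[Y | f_Φ, A] = f_Φ and E[Y | f_Φ] = E[Y | f_Φ, A] almost surely. -/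
open MeasureTheory

/-! Both claims are the tower property: `f_Φ` is measurable for `σ(f_Φ) ≤ σ(f_Φ, A) ≤ σ(Φ(X), A)`,
so conditioning `Y` on either smaller σ-algebra gives back the conditional expectation on the
largest one, `f_Φ` itself. -/

theorem condExp_ae_eq_condExp_of_le_of_stronglyMeasurable {α E : Type*}
    [NormedAddCommGroup E] [NormedSpace ℝ E] [CompleteSpace E]
    {m₁ m₂ m₀ : MeasurableSpace α} {μ : Measure α} [IsFiniteMeasure μ] {f : α → E}
    (hm₁₂ : m₁ ≤ m₂) (hm₂ : m₂ ≤ m₀) (hf : StronglyMeasurable[m₁] μ[f | m₂]) :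
    μ[f | m₁] =ᵐ[μ] μ[f | m₂] := by
  calc μ[f | m₁] =ᵐ[μ] μ[μ[f | m₂] | m₁] := (condExp_condExp_of_le hm₁₂ hm₂).symm
    _ = μ[f | m₂] := condExp_of_stronglyMeasurable (hm₁₂.trans hm₂) hf integrable_condExp

theorem transformed_bayes_score_calibrated_and_sufficient_general
    {Ω 𝒳 𝒳' 𝒜 : Type*} [MeasurableSpace Ω] [MeasurableSpace 𝒳] [MeasurableSpace 𝒳']
    [MeasurableSpace 𝒜]
    (μ : Measure Ω) [IsProbabilityMeasure μ]
    (X : Ω → 𝒳) (A : Ω → 𝒜) (Y : Ω → ℝ) (Φ : 𝒳 → 𝒳')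
    (hX : Measurable X) (hA : Measurable A) (hΦ : Measurable Φ)
    (fΦ : Ω → ℝ)
    (hfΦ : fΦ = μ[Y | MeasurableSpace.comap (fun ω => (Φ (X ω), A ω)) inferInstance]) :
    (μ[Y | MeasurableSpace.comap (fun ω => (fΦ ω, A ω)) inferInstance] =ᵐ[μ] fΦ) ∧
    (μ[Y | MeasurableSpace.comap fΦ inferInstance] =ᵐ[μ]
      μ[Y | MeasurableSpace.comap (fun ω => (fΦ ω, A ω)) inferInstance]) := by
  have hm : MeasurableSpace.comap (fun ω => (Φ (X ω), A ω)) inferInstance ≤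
      ‹MeasurableSpace Ω› :=
    ((hΦ.comp hX).prodMk hA).comap_le
  set m := MeasurableSpace.comap (fun ω => (Φ (X ω), A ω)) inferInstance
  have hfΦ_m : Measurable[m] fΦ := hfΦ ▸ stronglyMeasurable_condExp.measurable
  have hA_m : Measurable[m] A := measurable_snd.comp (comap_measurable _)
  have hfA_le : MeasurableSpace.comap (fun ω => (fΦ ω, A ω)) inferInstance ≤ m :=
    (hfΦ_m.prodMk hA_m).comap_le
  have hf_le : MeasurableSpace.comap fΦ inferInstance ≤
      MeasurableSpace.comap (fun ω => (fΦ ω, A ω)) inferInstance :=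
    MeasurableSpace.comap_le_comap_of_eq_comp Prod.fst measurable_fst rfl
  have hcal := condExp_ae_eq_condExp_of_le_of_stronglyMeasurable hfA_le hm (by
    rw [← hfΦ]; exact (measurable_fst.comp (comap_measurable _)).stronglyMeasurable)
  have hsuf := condExp_ae_eq_condExp_of_le_of_stronglyMeasurable (hf_le.trans hfA_le) hm (by
    rw [← hfΦ]; exact (comap_measurable fΦ).stronglyMeasurable)
  rw [← hfΦ] at hcal hsuf
  exact ⟨hcal, hsuf.trans hcal.symm⟩

/-- For any measurable map Φ : 𝒳 → 𝒳', the score f_Φ := E[Y | Φ(X), A] is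
calibrated (E[Y | f_Φ, A] = f_Φ a.s.) and sufficient (E[Y | f_Φ] = E[Y | f_Φ, A] a.s.). -/
theorem transformed_bayes_score_calibrated_and_sufficient
    {Ω 𝒳 𝒳' 𝒜 : Type*} [MeasurableSpace Ω] [MeasurableSpace 𝒳] [MeasurableSpace 𝒳']
    [MeasurableSpace 𝒜]
    (μ : Measure Ω) [IsProbabilityMeasure μ]
    (X : Ω → 𝒳) (A : Ω → 𝒜) (Y : Ω → ℝ) (Φ : 𝒳 → 𝒳')
    (hX : Measurable X) (hA : Measurable A) (hY : Measurable Y) (hΦ : Measurable Φ)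
    (hY01 : ∀ ω, Y ω = 0 ∨ Y ω = 1)
    (fΦ : Ω → ℝ)
    (hfΦ : fΦ = μ[Y | MeasurableSpace.comap (fun ω => (Φ (X ω), A ω)) inferInstance]) :
    (μ[Y | MeasurableSpace.comap (fun ω => (fΦ ω, A ω)) inferInstance] =ᵐ[μ] fΦ) ∧
    (μ[Y | MeasurableSpace.comap fΦ inferInstance] =ᵐ[μ]
      μ[Y | MeasurableSpace.comap (fun ω => (fΦ ω, A ω)) inferInstance]) :=
  transformed_bayes_score_calibrated_and_sufficient_general μ X A Y Φ hX hA hΦ fΦ hfΦ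
end

section
/- Let f = f(X) be a score function of X only, and f^B = E[Y | X, A] the calibrated Bayes score. Then E[(E[Y | f, A] - E[Y | f^B, A])^2] ≤ 4 · E[(f - f^B)^2]. -/
/-!
With `Z = f(X) - f^B`, the tower property through `σ(X, A)` gives `E[Y | f^B, A] = f^B`
(as `f^B` is `σ(f^B, A)`-measurable) and `E[Y | f, A] = f(X) - E[Z | f, A]` (as `f(X)` is
`σ(f, A)`-measurable). So the left-hand side is `E[(Z - E[Z | f, A])²]`, the expected conditional
variance of `Z`, which is at most `E[Z²]`.
-/

open MeasureTheory ProbabilityTheory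

section
variable {Ω : Type*} {m₁ m₂ m₀ : MeasurableSpace Ω} {μ : Measure Ω} [IsFiniteMeasure μ]

lemma integral_sq_sub_condExp_le {Z : Ω → ℝ} (hm : m₁ ≤ m₀) (hZ : MemLp Z 2 μ) :
    ∫ ω, (Z ω - μ[Z | m₁] ω) ^ 2 ∂μ ≤ ∫ ω, Z ω ^ 2 ∂μ :=
  calc ∫ ω, (Z ω - μ[Z | m₁] ω) ^ 2 ∂μ
      = ∫ ω, Var[Z; μ | m₁] ω ∂μ := (integral_condExp hm).symm
    _ ≤ ∫ ω, μ[Z ^ 2 | m₁] ω ∂μ :=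
      integral_mono_ae integrable_condVar integrable_condExp (condVar_ae_le_condExp_sq hm hZ)
    _ = ∫ ω, Z ω ^ 2 ∂μ := integral_condExp hm

lemma condExp_ae_eq_of_stronglyMeasurable_condExp {Y : Ω → ℝ} (h₁₂ : m₁ ≤ m₂)
    (h₂ : m₂ ≤ m₀) (hY : StronglyMeasurable[m₁] μ[Y | m₂]) : μ[Y | m₁] =ᵐ[μ] μ[Y | m₂] := by
  rw [← condExp_of_stronglyMeasurable (h₁₂.trans h₂) hY integrable_condExp]
  exact (condExp_condExp_of_le h₁₂ h₂).symm

lemma condExp_ae_eq_sub_condExp_sub {Y g : Ω → ℝ} (h₁₂ : m₁ ≤ m₂)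
    (h₂ : m₂ ≤ m₀) (hg : StronglyMeasurable[m₁] g) (hg_int : Integrable g μ) :
    μ[Y | m₁] =ᵐ[μ] g - μ[g - μ[Y | m₂] | m₁] := by
  filter_upwards [condExp_sub (m := m₁) hg_int (integrable_condExp (m := m₂) (f := Y)),
    condExp_condExp_of_le (μ := μ) (f := Y) h₁₂ h₂] with ω h_sub h_tower
  simp [h_sub, h_tower, condExp_of_stronglyMeasurable (h₁₂.trans h₂) hg hg_int]

lemma condExp_sub_condExp_ae_eq {Y g : Ω → ℝ} {m₁' : MeasurableSpace Ω} (h₁₂ : m₁ ≤ m₂)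
    (h₁'₂ : m₁' ≤ m₂) (h₂ : m₂ ≤ m₀) (hg : StronglyMeasurable[m₁] g) (hg_int : Integrable g μ)
    (hY : StronglyMeasurable[m₁'] μ[Y | m₂]) :
    μ[Y | m₁] - μ[Y | m₁'] =ᵐ[μ] (g - μ[Y | m₂]) - μ[g - μ[Y | m₂] | m₁] := by
  filter_upwards [condExp_ae_eq_sub_condExp_sub (Y := Y) h₁₂ h₂ hg hg_int,
    condExp_ae_eq_of_stronglyMeasurable_condExp h₁'₂ h₂ hY] with ω h₁ h₁'
  simp only [Pi.sub_apply, h₁, h₁']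
  ring

end

section
variable {Ω α β γ : Type*} [MeasurableSpace α] [MeasurableSpace β] [MeasurableSpace γ]
  {W : Ω → α} {V : Ω → β} {A : Ω → γ}

lemma comap_prodMk_le_comap_prodMk
    (hV : Measurable[.comap (fun ω => (W ω, A ω)) inferInstance] V) :
    MeasurableSpace.comap (fun ω => (V ω, A ω)) inferInstance ≤
      MeasurableSpace.comap (fun ω => (W ω, A ω)) inferInstance :=
  (hV.prodMk (measurable_snd.comp (comap_measurable _))).comap_le

lemma stronglyMeasurable_comap_prodMk_fst {V : Ω → ℝ} :
    StronglyMeasurable[.comap (fun ω => (V ω, A ω)) inferInstance] V :=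
  (measurable_fst.comp (comap_measurable _)).stronglyMeasurable

end

theorem condexp_l2_bound_general
    {Ω 𝒳 𝒜 : Type*} [MeasurableSpace Ω] [MeasurableSpace 𝒳] [MeasurableSpace 𝒜]
    (μ : Measure Ω) [IsProbabilityMeasure μ]
    (X : Ω → 𝒳) (A : Ω → 𝒜) (Y : Ω → ℝ) (f : 𝒳 → ℝ)
    (hX : Measurable X) (hA : Measurable A) (hf : Measurable f)
    (hY01 : ∀ ω, Y ω = 0 ∨ Y ω = 1)
    (hf01 : ∀ x, f x ∈ Set.Icc (0 : ℝ) 1)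
    (fB : Ω → ℝ)
    (hfB : fB = μ[Y | MeasurableSpace.comap (fun ω => (X ω, A ω)) inferInstance]) :
    ∫ ω, ((μ[Y | MeasurableSpace.comap (fun ω => (f (X ω), A ω)) inferInstance]) ω -
          (μ[Y | MeasurableSpace.comap (fun ω => (fB ω, A ω)) inferInstance]) ω) ^ 2 ∂μ ≤
      4 * ∫ ω, (f (X ω) - fB ω) ^ 2 ∂μ := by
  have hXA_le := (hX.prodMk hA).comap_le
  set mXA : MeasurableSpace Ω := .comap (fun ω => (X ω, A ω)) inferInstance
  set mfA : MeasurableSpace Ω := .comap (fun ω => (f (X ω), A ω)) inferInstance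
  have hfB_XA : StronglyMeasurable[mXA] fB := hfB ▸ stronglyMeasurable_condExp
  have hfA_le : mfA ≤ mXA :=
    comap_prodMk_le_comap_prodMk (hf.comp (measurable_fst.comp (comap_measurable _)))
  have hfX_bdd (ω : Ω) : |f (X ω)| ≤ 1 :=
    abs_le.2 ⟨by linarith [(hf01 (X ω)).1], (hf01 (X ω)).2⟩
  have hfB_bdd : ∀ᵐ ω ∂μ, |fB ω| ≤ 1 := hfB ▸ ae_bdd_abs_condExp_of_ae_bdd_abs
    (.of_forall fun ω => by rcases hY01 ω with h | h <;> simp [h])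
  have hfX_int : Integrable (fun ω => f (X ω)) μ :=
    .of_bound (hf.comp hX).aestronglyMeasurable 1 (.of_forall hfX_bdd)
  have hZ : MemLp (fun ω => f (X ω) - fB ω) 2 μ := by
    refine .of_bound
      ((hf.comp hX).sub (hfB_XA.measurable.mono hXA_le le_rfl)).aestronglyMeasurable 2 ?_
    filter_upwards [hfB_bdd] with ω h
    exact (abs_sub _ _).trans (by linarith [hfX_bdd ω])
  have hdiff := condExp_sub_condExp_ae_eq (μ := μ) (Y := Y) hfA_le
    (comap_prodMk_le_comap_prodMk hfB_XA.measurable) hXA_le stronglyMeasurable_comap_prodMk_fst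
    hfX_int (hfB ▸ stronglyMeasurable_comap_prodMk_fst)
  rw [← hfB] at hdiff
  calc _ = ∫ ω, ((f (X ω) - fB ω) - μ[fun ω => f (X ω) - fB ω | mfA] ω) ^ 2 ∂μ :=
        integral_congr_ae (hdiff.fun_comp (· ^ 2))
    _ ≤ ∫ ω, (f (X ω) - fB ω) ^ 2 ∂μ := integral_sq_sub_condExp_le (hfA_le.trans hXA_le) hZ
    _ ≤ 4 * ∫ ω, (f (X ω) - fB ω) ^ 2 ∂μ :=
      le_mul_of_one_le_left (integral_nonneg fun ω => sq_nonneg _) (by norm_num)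

/-- For a score f = f(X) of the features only and the calibrated Bayes score
f^B = E[Y | X, A], one has E[(E[Y | f, A] - E[Y | f^B, A])²] ≤ 4 E[(f - f^B)²]. -/
theorem condexp_l2_bound
    {Ω 𝒳 𝒜 : Type*} [MeasurableSpace Ω] [MeasurableSpace 𝒳] [MeasurableSpace 𝒜]
    (μ : Measure Ω) [IsProbabilityMeasure μ]
    (X : Ω → 𝒳) (A : Ω → 𝒜) (Y : Ω → ℝ) (f : 𝒳 → ℝ)
    (hX : Measurable X) (hA : Measurable A) (hY : Measurable Y) (hf : Measurable f)
    (hY01 : ∀ ω, Y ω = 0 ∨ Y ω = 1)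
    (hf01 : ∀ x, f x ∈ Set.Icc (0 : ℝ) 1)
    (fB : Ω → ℝ)
    (hfB : fB = μ[Y | MeasurableSpace.comap (fun ω => (X ω, A ω)) inferInstance]) :
    ∫ ω, ((μ[Y | MeasurableSpace.comap (fun ω => (f (X ω), A ω)) inferInstance]) ω -
          (μ[Y | MeasurableSpace.comap (fun ω => (fB ω, A ω)) inferInstance]) ω) ^ 2 ∂μ ≤
      4 * ∫ ω, (f (X ω) - fB ω) ^ 2 ∂μ :=
  condexp_l2_bound_general μ X A Y f hX hA hf hY01 hf01 fB hfB
end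

section
/- Let f = f(X) be a score function of X only and f^B = E[Y | X, A]. Define the sufficiency gap suf_f(A) = E[|E[Y | f] - E[Y | f, A]|]. Then suf_f(A) ≤ 4 · sqrt(E[(f - f^B)^2]). -/
/-!
The score `g = f ∘ X` is measurable for both `σ(f(X))` and `σ(f(X), A)`, which lie below
`σ(X, A)`. For either of them, `m` say, the tower property gives
`E[Y | m] - g = E[f^B - g | m]`, so conditional Jensen yields `E|E[Y | m] - g| ≤ E|f^B - g|`,
and this is at most `‖f^B - g‖₂` by Cauchy–Schwarz. The triangle inequality through `g` then
gives the bound, even with constant `2`.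
-/

open MeasureTheory ProbabilityTheory

section

variable {Ω : Type*} {m₀ : MeasurableSpace Ω} {μ : Measure Ω}

lemma integral_abs_le_sqrt_integral_sq [IsProbabilityMeasure μ] {h : Ω → ℝ}
    (hh : MemLp h 2 μ) : ∫ ω, |h ω| ∂μ ≤ √(∫ ω, h ω ^ 2 ∂μ) := by
  have hvar := variance_eq_sub hh.abs ▸ variance_nonneg |h| μ
  simp only [Pi.pow_apply, Pi.abs_apply, sq_abs] at hvar
  rw [Real.le_sqrt (integral_nonneg fun _ => abs_nonneg _)
    (integral_nonneg fun _ => sq_nonneg _)]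
  linarith

lemma integral_abs_condExp_sub_le_of_le [IsFiniteMeasure μ] {m m' : MeasurableSpace Ω}
    (hm : m ≤ m') (hm' : m' ≤ m₀) {Y g : Ω → ℝ} (hg : StronglyMeasurable[m] g)
    (hgi : Integrable g μ) :
    ∫ ω, |μ[Y | m] ω - g ω| ∂μ ≤ ∫ ω, |μ[Y | m'] ω - g ω| ∂μ := by
  have htower : μ[Y | m] - g =ᵐ[μ] μ[μ[Y | m'] - g | m] := by
    filter_upwards [condExp_condExp_of_le (f := Y) hm hm',
      condExp_sub (m := m) integrable_condExp hgi] with ω htow hsub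
    rw [Pi.sub_apply, ← htow, hsub, Pi.sub_apply,
      condExp_of_stronglyMeasurable (hm.trans hm') hg hgi]
  calc ∫ ω, |μ[Y | m] ω - g ω| ∂μ = ∫ ω, |μ[μ[Y | m'] - g | m] ω| ∂μ :=
        integral_congr_ae (htower.mono fun ω h => congrArg abs h)
    _ ≤ _ := integral_abs_condExp_le _

lemma integral_abs_sub_le_add {f g h : Ω → ℝ} (hf : Integrable f μ) (hg : Integrable g μ)
    (hh : Integrable h μ) :
    ∫ ω, |f ω - g ω| ∂μ ≤ ∫ ω, |f ω - h ω| ∂μ + ∫ ω, |g ω - h ω| ∂μ := by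
  have hfh : Integrable (fun ω => |f ω - h ω|) μ := (hf.sub hh).abs
  have hgh : Integrable (fun ω => |g ω - h ω|) μ := (hg.sub hh).abs
  rw [← integral_add hfh hgh]
  refine integral_mono (hf.sub hg).abs (hfh.add hgh) fun ω => ?_
  simpa only [abs_sub_comm (h ω)] using abs_sub_le (f ω) (h ω) (g ω)

lemma integral_abs_condExp_sub_condExp_le [IsProbabilityMeasure μ]
    {m₁ m₂ m : MeasurableSpace Ω} (h₁ : m₁ ≤ m) (h₂ : m₂ ≤ m) (hm : m ≤ m₀) {Y g : Ω → ℝ}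
    (hg₁ : StronglyMeasurable[m₁] g) (hg₂ : StronglyMeasurable[m₂] g)
    (hL2 : MemLp (fun ω => g ω - μ[Y | m] ω) 2 μ) :
    ∫ ω, |μ[Y | m₁] ω - μ[Y | m₂] ω| ∂μ ≤ 2 * √(∫ ω, (g ω - μ[Y | m] ω) ^ 2 ∂μ) := by
  have hgi : Integrable g μ := by
    refine ((hL2.integrable one_le_two).add (integrable_condExp (m := m) (f := Y))).congr ?_
    exact .of_forall fun ω => sub_add_cancel (g ω) _
  have hL1 : ∫ ω, |μ[Y | m] ω - g ω| ∂μ ≤ √(∫ ω, (g ω - μ[Y | m] ω) ^ 2 ∂μ) := by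
    simpa only [abs_sub_comm] using integral_abs_le_sqrt_integral_sq hL2
  calc ∫ ω, |μ[Y | m₁] ω - μ[Y | m₂] ω| ∂μ
      ≤ ∫ ω, |μ[Y | m₁] ω - g ω| ∂μ + ∫ ω, |μ[Y | m₂] ω - g ω| ∂μ :=
        integral_abs_sub_le_add integrable_condExp integrable_condExp hgi
    _ ≤ ∫ ω, |μ[Y | m] ω - g ω| ∂μ + ∫ ω, |μ[Y | m] ω - g ω| ∂μ :=
        add_le_add (integral_abs_condExp_sub_le_of_le h₁ hm hg₁ hgi)
          (integral_abs_condExp_sub_le_of_le h₂ hm hg₂ hgi)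
    _ ≤ 2 * √(∫ ω, (g ω - μ[Y | m] ω) ^ 2 ∂μ) := by linarith

end

/-- Sufficiency gap bound: suf_f(A) = E[|E[Y|f] - E[Y|f,A]|] ≤ 4 √(E[(f - f^B)²]),
where f^B = E[Y | X, A] is the calibrated Bayes score. -/
theorem sufficiency_gap_le_l2
    {Ω 𝒳 𝒜 : Type*} [MeasurableSpace Ω] [MeasurableSpace 𝒳] [MeasurableSpace 𝒜]
    (μ : Measure Ω) [IsProbabilityMeasure μ]
    (X : Ω → 𝒳) (A : Ω → 𝒜) (Y : Ω → ℝ) (f : 𝒳 → ℝ)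
    (hX : Measurable X) (hA : Measurable A) (hY : Measurable Y) (hf : Measurable f)
    (hY01 : ∀ ω, Y ω = 0 ∨ Y ω = 1)
    (hf01 : ∀ x, f x ∈ Set.Icc (0 : ℝ) 1)
    (fB : Ω → ℝ)
    (hfB : fB = μ[Y | MeasurableSpace.comap (fun ω => (X ω, A ω)) inferInstance]) :
    ∫ ω, |(μ[Y | MeasurableSpace.comap (fun ω => f (X ω)) inferInstance]) ω -
          (μ[Y | MeasurableSpace.comap (fun ω => (f (X ω), A ω)) inferInstance]) ω| ∂μ ≤
      4 * Real.sqrt (∫ ω, (f (X ω) - fB ω) ^ 2 ∂μ) := by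
  have hXA := comap_measurable (m := inferInstance) fun ω => (X ω, A ω)
  have hfXA := comap_measurable (m := inferInstance) fun ω => (f (X ω), A ω)
  have hfX_L2 : MemLp (fun ω => f (X ω)) 2 μ :=
    memLp_of_bounded (.of_forall fun ω => hf01 (X ω)) (hf.comp hX).aestronglyMeasurable 2
  have hY_L2 : MemLp Y 2 μ := memLp_of_bounded (a := 0) (b := 1)
    (.of_forall fun ω => by rcases hY01 ω with h | h <;> simp [h]) hY.aestronglyMeasurable 2
  subst hfB
  refine (integral_abs_condExp_sub_condExp_le (g := fun ω => f (X ω))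
    ((hf.comp measurable_fst).comp hXA).comap_le
    (((hf.comp measurable_fst).prodMk measurable_snd).comp hXA).comap_le
    (hX.prodMk hA).comap_le
    (comap_measurable _).stronglyMeasurable
    (measurable_fst.comp hfXA).stronglyMeasurable
    (hfX_L2.sub (hY_L2.condExp one_le_two))).trans ?_
  gcongr
  norm_num
end

section
/- Let f^B = E[Y | X, A], q̄ = Pr[Y = 1] ∈ (0,1), q_A = Pr[Y = 1 | A], and define the separation gap sep_f(A) = E_{Y,A}[|E[f | Y, A] - E[f | Y]|]. Then sep_{f^B}(A) ≥ (E[Var[Y | X, A]] / Var[Y]) · E_A[|q_A - q̄|]. -/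
/-!
Put `ε = sign (E[Y | A] - q̄)`; it is `σ(A)`-measurable, so `E_A |q_A - q̄| = E[ε (Y - q̄)]`.
Since `σ(A)` lies below both `σ(X, A)` and `σ(Y, A)`, the tower property gives
`E[ε E[f^B | Y, A]] = E[ε f^B] = E[ε Y]`. Since `Y` is binary, `E[f^B | Y]` is the affine
regression `q̄ + β (Y - q̄)` with `β = Cov(f^B, Y) / Var Y`, so
`E[ε (E[f^B | Y, A] - E[f^B | Y])] = (1 - β) E[ε (Y - q̄)]`, and `E[(f^B)²] = E[f^B Y]` turns
`1 - β` into `E[f^B (1 - f^B)] / Var Y`. Finally `ε u ≤ |u|` because `|ε| ≤ 1`.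
-/

open MeasureTheory

theorem monotone_sign_real : Monotone fun x : ℝ => (SignType.sign x : ℝ) := by
  intro a b hab
  rcases lt_trichotomy a 0 with ha | rfl | ha <;> rcases lt_trichotomy b 0 with hb | rfl | hb <;>
    simp [*] <;> linarith

theorem Measurable.sign_real {α : Type*} {mα : MeasurableSpace α} {f : α → ℝ}
    (hf : Measurable f) : Measurable fun a => (SignType.sign (f a) : ℝ) :=
  monotone_sign_real.measurable.comp hf

theorem norm_sign_real_le_one (x : ℝ) : ‖(SignType.sign x : ℝ)‖ ≤ 1 := by
  rcases lt_trichotomy x 0 with hx | rfl | hx <;> simp [*]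

section Integral

variable {Ω : Type*} [MeasurableSpace Ω] {μ : Measure Ω}

theorem integral_mul_le_integral_abs_of_norm_le_one {ε g : Ω → ℝ} (hg : Integrable g μ)
    (hε : AEStronglyMeasurable ε μ) (hε_le : ∀ᵐ ω ∂μ, ‖ε ω‖ ≤ 1) :
    ∫ ω, ε ω * g ω ∂μ ≤ ∫ ω, |g ω| ∂μ := by
  refine integral_mono_ae (hg.bdd_mul hε hε_le) hg.abs ?_
  filter_upwards [hε_le] with ω hω
  calc ε ω * g ω ≤ |ε ω| * |g ω| := by rw [← abs_mul]; exact le_abs_self _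
    _ ≤ |g ω| := mul_le_of_le_one_left (abs_nonneg _) hω

end Integral

section ConditionalExpectation

variable {Ω : Type*} {m mΩ : MeasurableSpace Ω} {μ : Measure Ω} [IsFiniteMeasure μ]

theorem integral_mul_condExp_of_bound (hm : m ≤ mΩ) {f g : Ω → ℝ}
    (hf : StronglyMeasurable[m] f) (hg : Integrable g μ) (c : ℝ) (hf_bound : ∀ᵐ ω ∂μ, ‖f ω‖ ≤ c) :
    ∫ ω, f ω * (μ[g|m]) ω ∂μ = ∫ ω, f ω * g ω ∂μ :=
  (integral_congr_ae (condExp_stronglyMeasurable_mul_of_bound hm hf hg c hf_bound)).symm.trans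
    (integral_condExp hm)

theorem integral_abs_condExp_sub_const (hm : m ≤ mΩ) {Y : Ω → ℝ} (hY : Integrable Y μ)
    (c : ℝ) :
    ∫ ω, |(μ[Y|m]) ω - c| ∂μ =
      ∫ ω, (SignType.sign ((μ[Y|m]) ω - c) : ℝ) * (Y ω - c) ∂μ := by
  have hsign : StronglyMeasurable[m] fun ω => (SignType.sign ((μ[Y|m]) ω - c) : ℝ) :=
    (stronglyMeasurable_condExp.measurable.sub_const c).sign_real.stronglyMeasurable
  have hcond : μ[fun ω => Y ω - c|m] =ᵐ[μ] fun ω => (μ[Y|m]) ω - c := by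
    have h := condExp_sub hY (integrable_const c) m
    rwa [condExp_const hm] at h
  calc ∫ ω, |(μ[Y|m]) ω - c| ∂μ
      = ∫ ω, (SignType.sign ((μ[Y|m]) ω - c) : ℝ) * (μ[fun ω => Y ω - c|m]) ω ∂μ := by
        refine integral_congr_ae ?_
        filter_upwards [hcond] with ω hω
        rw [hω, sign_mul_self]
    _ = _ := integral_mul_condExp_of_bound hm hsign (hY.sub (integrable_const c)) 1
        (ae_of_all _ fun _ => norm_sign_real_le_one _)

end ConditionalExpectation

section Binary

variable {Ω : Type*} [MeasurableSpace Ω] {μ : Measure Ω} {Y : Ω → ℝ}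

theorem norm_le_one_of_eq_zero_or_eq_one {y : ℝ} (hy : y = 0 ∨ y = 1) : ‖y‖ ≤ 1 := by
  rcases hy with rfl | rfl <;> simp

theorem integrable_of_binary [IsFiniteMeasure μ] (hY : Measurable Y)
    (hY01 : ∀ ω, Y ω = 0 ∨ Y ω = 1) : Integrable Y μ :=
  .of_bound hY.aestronglyMeasurable 1
    (ae_of_all _ fun ω => norm_le_one_of_eq_zero_or_eq_one (hY01 ω))

theorem Integrable.mul_of_binary (hY : Measurable Y) (hY01 : ∀ ω, Y ω = 0 ∨ Y ω = 1)
    {g : Ω → ℝ} (hg : Integrable g μ) : Integrable (fun ω => g ω * Y ω) μ :=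
  hg.mul_bdd hY.aestronglyMeasurable
    (ae_of_all _ fun ω => norm_le_one_of_eq_zero_or_eq_one (hY01 ω))

theorem setIntegral_preimage_of_binary (hY : Measurable Y) (hY01 : ∀ ω, Y ω = 0 ∨ Y ω = 1)
    {g : Ω → ℝ} (hg : Integrable g μ) {t : Set ℝ} (ht : MeasurableSet t) :
    ∫ ω in Y ⁻¹' t, g ω ∂μ =
      t.indicator 1 1 * ∫ ω, g ω * Y ω ∂μ +
        t.indicator 1 0 * (∫ ω, g ω ∂μ - ∫ ω, g ω * Y ω ∂μ) := by
  have hgY := Integrable.mul_of_binary hY hY01 hg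
  have hg_sub : Integrable (fun ω => g ω - g ω * Y ω) μ := hg.sub hgY
  have hind : (Y ⁻¹' t).indicator g =
      fun ω => t.indicator 1 1 * (g ω * Y ω) + t.indicator 1 0 * (g ω - g ω * Y ω) := by
    ext ω
    rcases hY01 ω with h | h <;> by_cases h0 : (0 : ℝ) ∈ t <;>
      by_cases h1 : (1 : ℝ) ∈ t <;> simp [h, h0, h1]
  rw [← integral_indicator (hY ht), hind, integral_add (hgY.const_mul _) (hg_sub.const_mul _),
    integral_const_mul, integral_const_mul, integral_sub hg hgY]

theorem condExp_comap_ae_eq_of_binary [IsProbabilityMeasure μ] (hY : Measurable Y)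
    (hY01 : ∀ ω, Y ω = 0 ∨ Y ω = 1)
    (hvar : (∫ ω, Y ω ∂μ) * (1 - ∫ ω, Y ω ∂μ) ≠ 0) {g : Ω → ℝ} (hg : Integrable g μ) :
    μ[g|MeasurableSpace.comap Y inferInstance] =ᵐ[μ] fun ω => ∫ ω, g ω ∂μ +
      (∫ ω, g ω * Y ω ∂μ - (∫ ω, g ω ∂μ) * ∫ ω, Y ω ∂μ) /
        ((∫ ω, Y ω ∂μ) * (1 - ∫ ω, Y ω ∂μ)) * (Y ω - ∫ ω, Y ω ∂μ) := by
  set p := ∫ ω, Y ω ∂μ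
  set b := (∫ ω, g ω * Y ω ∂μ - (∫ ω, g ω ∂μ) * p) / (p * (1 - p))
  have hYi : Integrable Y μ := integrable_of_binary hY hY01
  have hYc : Integrable (fun ω => Y ω - p) μ := hYi.sub (integrable_const p)
  have hreg : Integrable (fun ω => ∫ ω, g ω ∂μ + b * (Y ω - p)) μ :=
    (integrable_const _).add (hYc.const_mul b)
  have hreg_meas : StronglyMeasurable[MeasurableSpace.comap Y inferInstance]
      fun ω => ∫ ω, g ω ∂μ + b * (Y ω - p) :=
    (measurable_const.add (measurable_const.mul
      ((comap_measurable Y).sub measurable_const))).stronglyMeasurable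
  have hmean : ∫ ω, (∫ ω, g ω ∂μ + b * (Y ω - p)) ∂μ = ∫ ω, g ω ∂μ := by
    rw [integral_add (integrable_const _) (hYc.const_mul b),
      integral_const_mul, integral_sub hYi (integrable_const p)]
    simp [p]
  have hmoment : ∫ ω, (∫ ω, g ω ∂μ + b * (Y ω - p)) * Y ω ∂μ = ∫ ω, g ω * Y ω ∂μ := by
    have hY_idem : ∀ ω,
        (∫ ω, g ω ∂μ + b * (Y ω - p)) * Y ω = (∫ ω, g ω ∂μ + b * (1 - p)) * Y ω :=
      fun ω => by rcases hY01 ω with h | h <;> simp [h]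
    simp_rw [hY_idem]
    rw [integral_const_mul]
    calc (∫ ω, g ω ∂μ + b * (1 - p)) * p
        = (∫ ω, g ω ∂μ) * p + b * (p * (1 - p)) := by ring
      _ = ∫ ω, g ω * Y ω ∂μ := by rw [div_mul_cancel₀ _ hvar]; ring
  refine (ae_eq_condExp_of_forall_setIntegral_eq hY.comap_le hg
    (fun _ _ _ => hreg.integrableOn) ?_ hreg_meas.aestronglyMeasurable).symm
  rintro s ⟨t, ht, rfl⟩ -
  rw [setIntegral_preimage_of_binary hY hY01 hreg ht,
    setIntegral_preimage_of_binary hY hY01 hg ht, hmean, hmoment]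

end Binary

section Separation

variable {Ω : Type*} {m₁ m₂ mΩ : MeasurableSpace Ω} {μ : Measure Ω}
  [IsProbabilityMeasure μ] {Y ε : Ω → ℝ}

theorem integral_mul_condExp_sub_condExp_comap (hm₁ : m₁ ≤ mΩ) (hm₂ : m₂ ≤ mΩ)
    (hY : Measurable Y) (hY01 : ∀ ω, Y ω = 0 ∨ Y ω = 1)
    (hvar : (∫ ω, Y ω ∂μ) * (1 - ∫ ω, Y ω ∂μ) ≠ 0)
    (hε₁ : StronglyMeasurable[m₁] ε) (hε₂ : StronglyMeasurable[m₂] ε) {C : ℝ}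
    (hε : ∀ᵐ ω ∂μ, ‖ε ω‖ ≤ C) :
    ∫ ω, ε ω * ((μ[μ[Y|m₁]|m₂]) ω -
        (μ[μ[Y|m₁]|MeasurableSpace.comap Y inferInstance]) ω) ∂μ =
      (∫ ω, (μ[Y|m₁]) ω * (1 - (μ[Y|m₁]) ω) ∂μ) /
        ((∫ ω, Y ω ∂μ) * (1 - ∫ ω, Y ω ∂μ)) * ∫ ω, ε ω * (Y ω - ∫ ω, Y ω ∂μ) ∂μ := by
  set f := μ[Y|m₁]
  set p := ∫ ω, Y ω ∂μ
  have hYi : Integrable Y μ := integrable_of_binary hY hY01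
  have hfi : Integrable f μ := integrable_condExp
  have hf_le : ∀ᵐ ω ∂μ, ‖f ω‖ ≤ 1 := by
    simpa using ae_bdd_abs_condExp_of_ae_bdd_abs (m := m₁) (R := (1 : ℝ))
      (ae_of_all μ fun ω => norm_le_one_of_eq_zero_or_eq_one (hY01 ω))
  have hε_meas : AEStronglyMeasurable ε μ := (hε₁.mono hm₁).aestronglyMeasurable
  have hεi : Integrable ε μ := .of_bound hε_meas C hε
  have hεYc : Integrable (fun ω => ε ω * (Y ω - p)) μ :=
    (hYi.sub (integrable_const p)).bdd_mul hε_meas hε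
  have hf_mean : ∫ ω, f ω ∂μ = p := integral_condExp hm₁
  have hf_var : ∫ ω, f ω * (1 - f ω) ∂μ = p - ∫ ω, f ω * Y ω ∂μ := by
    have hff : ∫ ω, f ω * f ω ∂μ = ∫ ω, f ω * Y ω ∂μ :=
      integral_mul_condExp_of_bound hm₁ stronglyMeasurable_condExp hYi 1 hf_le
    simp_rw [mul_one_sub]
    rw [integral_sub hfi (hfi.bdd_mul hfi.aestronglyMeasurable hf_le), hff, hf_mean]
  have hε_tower : ∫ ω, ε ω * (μ[f|m₂]) ω ∂μ = ∫ ω, ε ω * Y ω ∂μ :=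
    (integral_mul_condExp_of_bound hm₂ hε₂ hfi C hε).trans
      (integral_mul_condExp_of_bound hm₁ hε₁ hYi C hε)
  set b := (∫ ω, f ω * Y ω ∂μ - p * p) / (p * (1 - p))
  have hε_regression : ∫ ω, ε ω * (μ[f|MeasurableSpace.comap Y inferInstance]) ω ∂μ =
      p * ∫ ω, ε ω ∂μ + b * ∫ ω, ε ω * (Y ω - p) ∂μ := by
    calc _ = ∫ ω, (p * ε ω + b * (ε ω * (Y ω - p))) ∂μ := by
          refine integral_congr_ae ?_
          filter_upwards [condExp_comap_ae_eq_of_binary hY hY01 hvar hfi] with ω hω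
          rw [hω, hf_mean]
          ring
      _ = _ := by
        rw [integral_add (hεi.const_mul p) (hεYc.const_mul b), integral_const_mul,
          integral_const_mul]
  have hεY_split :
      ∫ ω, ε ω * Y ω ∂μ = ∫ ω, ε ω * (Y ω - p) ∂μ + p * ∫ ω, ε ω ∂μ := by
    rw [← integral_const_mul, ← integral_add hεYc (hεi.const_mul p)]
    congr with ω
    ring
  have hb : b * (p * (1 - p)) = ∫ ω, f ω * Y ω ∂μ - p * p := div_mul_cancel₀ _ hvar
  calc _ = ∫ ω, ε ω * (μ[f|m₂]) ω ∂μ -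
        ∫ ω, ε ω * (μ[f|MeasurableSpace.comap Y inferInstance]) ω ∂μ := by
        rw [← integral_sub (integrable_condExp.bdd_mul hε_meas hε)
          (integrable_condExp.bdd_mul hε_meas hε)]
        simp_rw [mul_sub]
    _ = _ := by
      have hcoef : 1 - b = (p - ∫ ω, f ω * Y ω ∂μ) / (p * (1 - p)) := by
        rw [eq_div_iff hvar, sub_mul, hb]
        ring
      rw [hε_tower, hε_regression, hεY_split, hf_var, ← hcoef]
      ring

end Separation

/-- Proposition 2.2 (separation gap of the calibrated Bayes score):
sep_{f^B}(A) = E[|E[f^B|Y,A] - E[f^B|Y]|] ≥ (E[Var[Y|X,A]]/Var[Y]) · E_A[|q_A - q̄|],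
where Var[Y|X,A] = f^B(1 - f^B), Var[Y] = q̄(1 - q̄), q_A = Pr[Y=1|A] = E[Y|A],
and q̄ = Pr[Y=1]. -/
theorem bayes_separation_gap_lower_bound
    {Ω 𝒳 𝒜 : Type*} [MeasurableSpace Ω] [MeasurableSpace 𝒳] [MeasurableSpace 𝒜]
    (μ : Measure Ω) [IsProbabilityMeasure μ]
    (X : Ω → 𝒳) (A : Ω → 𝒜) (Y : Ω → ℝ)
    (hX : Measurable X) (hA : Measurable A) (hY : Measurable Y)
    (hY01 : ∀ ω, Y ω = 0 ∨ Y ω = 1)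
    (fB : Ω → ℝ)
    (hfB : fB = μ[Y | MeasurableSpace.comap (fun ω => (X ω, A ω)) inferInstance])
    (qbar : ℝ) (hqbar : qbar = ∫ ω, Y ω ∂μ)
    (hqbar01 : qbar ∈ Set.Ioo (0 : ℝ) 1) :
    ((∫ ω, fB ω * (1 - fB ω) ∂μ) / (qbar * (1 - qbar))) *
        ∫ ω, |(μ[Y | MeasurableSpace.comap A inferInstance]) ω - qbar| ∂μ ≤
      ∫ ω, |(μ[fB | MeasurableSpace.comap (fun ω => (Y ω, A ω)) inferInstance]) ω -
            (μ[fB | MeasurableSpace.comap Y inferInstance]) ω| ∂μ := by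
  have hvar : (∫ ω, Y ω ∂μ) * (1 - ∫ ω, Y ω ∂μ) ≠ 0 := by
    rw [← hqbar]
    exact (mul_pos hqbar01.1 (sub_pos.2 hqbar01.2)).ne'
  set ε := fun ω =>
    (SignType.sign ((μ[Y | MeasurableSpace.comap A inferInstance]) ω - qbar) : ℝ)
  have hε : StronglyMeasurable[MeasurableSpace.comap A inferInstance] ε :=
    (stronglyMeasurable_condExp.measurable.sub_const qbar).sign_real.stronglyMeasurable
  have hε_le : ∀ᵐ ω ∂μ, ‖ε ω‖ ≤ 1 := ae_of_all _ fun _ => norm_sign_real_le_one _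
  have hA_XA : MeasurableSpace.comap A inferInstance ≤
      MeasurableSpace.comap (fun ω => (X ω, A ω)) inferInstance :=
    Measurable.comap_le (f := A) (measurable_snd.comp (comap_measurable _))
  have hA_YA : MeasurableSpace.comap A inferInstance ≤
      MeasurableSpace.comap (fun ω => (Y ω, A ω)) inferInstance :=
    Measurable.comap_le (f := A) (measurable_snd.comp (comap_measurable _))
  have key := integral_mul_condExp_sub_condExp_comap (hX.prodMk hA).comap_le
    (hY.prodMk hA).comap_le hY hY01 hvar (hε.mono hA_XA) (hε.mono hA_YA) hε_le
  rw [← hfB, ← hqbar] at key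
  calc _ = _ := by rw [integral_abs_condExp_sub_const hA.comap_le (integrable_of_binary hY hY01)]
    _ = _ := key.symm
    _ ≤ _ := integral_mul_le_integral_abs_of_norm_le_one
        (integrable_condExp.sub integrable_condExp) (hε.mono hA.comap_le).aestronglyMeasurable
        hε_le
end

section
/- Fix θ, θ̂ ∈ S¹ ⊂ ℝ². Define f_u(x) = 1/2 + ⟨u, x⟩/4 for u, x ∈ ℝ², and let X be uniform on S¹ with Y | X ∼ Bernoulli(f_θ(X)). Then the L¹ calibration distance satisfies E[|f_{θ̂}(X) - f_θ(X)|] = ‖θ̂ - θ‖₂ / (2π) ≥ sqrt(1 - ⟨θ, θ̂⟩²) / (2π). -/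
/-!
With `a + b i = r e^{iφ}`, the integrand is `|a cos t + b sin t| / 4 = r |cos (t - φ)| / 4`
for `(a, b) = θ̂ - θ`, and `∫₀^{2π} |cos (t - φ)| dt = ∫₀^{2π} |cos t| dt = 4` by periodicity.
For the inequality, unit vectors satisfy `‖θ̂ - θ‖² = 2 (1 - ⟨θ, θ̂⟩)`, which dominates
`(1 - ⟨θ, θ̂⟩)(1 + ⟨θ, θ̂⟩)` because `|⟨θ, θ̂⟩| ≤ 1`.
-/

open Real

theorem integral_abs_cos_zero_two_pi : ∫ t in (0 : ℝ)..2 * π, |cos t| = 4 := by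
  have hper : Function.Periodic (fun t => |cos t|) π := fun t => by simp [cos_add_pi]
  have hint (a b : ℝ) : IntervalIntegrable (fun t => |cos t|) MeasureTheory.volume a b :=
    continuous_cos.abs.intervalIntegrable a b
  have half_period : ∫ t in -(π / 2)..π / 2, |cos t| = 2 := by
    rw [intervalIntegral.integral_congr (g := cos), integral_cos]
    · norm_num
    · intro t ht
      rw [Set.uIcc_of_le (by linarith [pi_pos])] at ht
      exact abs_of_nonneg (cos_nonneg_of_mem_Icc ht)
  calc ∫ t in (0 : ℝ)..2 * π, |cos t|
      = ∫ t in (0 : ℝ)..0 + (2 : ℤ) • π, |cos t| := by simp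
    _ = 2 * ∫ t in (0 : ℝ)..0 + π, |cos t| := by
        rw [hper.intervalIntegral_add_zsmul_eq 2 0 hint]; simp
    _ = 2 * ∫ t in -(π / 2)..-(π / 2) + π, |cos t| := by rw [hper.intervalIntegral_add_eq 0]
    _ = 4 := by rw [show -(π / 2) + π = π / 2 by ring, half_period]; norm_num

theorem integral_abs_mul_cos_add_mul_sin (a b : ℝ) :
    ∫ t in (0 : ℝ)..2 * π, |a * cos t + b * sin t| = 4 * √(a ^ 2 + b ^ 2) := by
  set z : ℂ := ⟨a, b⟩
  have hnorm : ‖z‖ = √(a ^ 2 + b ^ 2) := by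
    rw [Complex.norm_def, Complex.normSq_apply]; simp [z, sq]
  have hphase (t : ℝ) : |a * cos t + b * sin t| = ‖z‖ * |cos (t - z.arg)| := by
    have hre : ‖z‖ * cos z.arg = a := Complex.norm_mul_cos_arg z
    have him : ‖z‖ * sin z.arg = b := Complex.norm_mul_sin_arg z
    have hlin : a * cos t + b * sin t = ‖z‖ * (cos t * cos z.arg + sin t * sin z.arg) := by
      rw [← hre, ← him]; ring
    rw [cos_sub, hlin, abs_mul, abs_norm]
  have hper : Function.Periodic (fun t => |cos t|) (2 * π) := fun t => by simp [cos_add_two_pi]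
  calc ∫ t in (0 : ℝ)..2 * π, |a * cos t + b * sin t|
      = ‖z‖ * ∫ t in (0 : ℝ) - z.arg..0 - z.arg + 2 * π, |cos t| := by
        simp_rw [hphase, intervalIntegral.integral_const_mul,
          intervalIntegral.integral_comp_sub_right (fun t => |cos t|)]
        ring_nf
    _ = 4 * √(a ^ 2 + b ^ 2) := by
        rw [hper.intervalIntegral_add_eq _ 0, zero_add, integral_abs_cos_zero_two_pi, hnorm,
          mul_comm]

theorem one_sub_sq_inner_le_norm_sub_sq {E : Type*} [NormedAddCommGroup E] [InnerProductSpace ℝ E]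
    {u v : E} (hu : ‖u‖ = 1) (hv : ‖v‖ = 1) : 1 - inner ℝ u v ^ 2 ≤ ‖v - u‖ ^ 2 := by
  have hdist : ‖v - u‖ ^ 2 = 2 * (1 - inner ℝ u v) := by
    rw [norm_sub_sq_real, hu, hv, real_inner_comm]; ring
  have hcs : |inner ℝ u v| ≤ 1 := by simpa [hu, hv] using abs_real_inner_le_norm u v
  rw [hdist]
  nlinarith [abs_le.mp hcs]

/-- For unit vectors θ, θ̂ ∈ S¹ and scores f_u(x) = 1/2 + ⟨u, x⟩/4, with X uniform
on the unit circle (uniform angle parametrization), the L¹ distance satisfies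
E[|f_{θ̂}(X) - f_θ(X)|] = ‖θ̂ - θ‖₂/(2π) ≥ √(1 - ⟨θ, θ̂⟩²)/(2π). -/
theorem calibration_l1_distance_on_circle
    (θ θhat : ℝ × ℝ)
    (hθ : θ.1 ^ 2 + θ.2 ^ 2 = 1) (hθhat : θhat.1 ^ 2 + θhat.2 ^ 2 = 1) :
    ((1 / (2 * π)) * ∫ t in (0 : ℝ)..(2 * π),
        |(1 / 2 + (θhat.1 * cos t + θhat.2 * sin t) / 4) -
         (1 / 2 + (θ.1 * cos t + θ.2 * sin t) / 4)| =
      Real.sqrt ((θhat.1 - θ.1) ^ 2 + (θhat.2 - θ.2) ^ 2) / (2 * π)) ∧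
    Real.sqrt (1 - (θ.1 * θhat.1 + θ.2 * θhat.2) ^ 2) / (2 * π) ≤
      Real.sqrt ((θhat.1 - θ.1) ^ 2 + (θhat.2 - θ.2) ^ 2) / (2 * π) := by
  have hdiff (t : ℝ) : (1 / 2 + (θhat.1 * cos t + θhat.2 * sin t) / 4) -
      (1 / 2 + (θ.1 * cos t + θ.2 * sin t) / 4) =
      ((θhat.1 - θ.1) * cos t + (θhat.2 - θ.2) * sin t) / 4 := by ring
  have hunit {x : ℝ × ℝ} (hx : x.1 ^ 2 + x.2 ^ 2 = 1) : ‖!₂[x.1, x.2]‖ = 1 := by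
    simp [EuclideanSpace.norm_eq, hx]
  constructor
  · simp_rw [hdiff, abs_div, intervalIntegral.integral_div, integral_abs_mul_cos_add_mul_sin]
    field_simp
    ring
  · gcongr
    simpa [EuclideanSpace.norm_sq_eq, PiLp.inner_apply, Fin.sum_univ_two, mul_comm] using
      one_sub_sq_inner_le_norm_sub_sq (hunit hθ) (hunit hθhat)
end
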